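/- arXiv:2411.08377 — 3 statements merged into one kernel-verified Lean document; each statement's English description precedes it below -/
import Mathlib

section
/- Define on dual vectors the function ‖x_s + x_i ε‖ := ‖x_s‖ + D_{x_i}‖x_s‖ ε, where D_{x_i}‖x_s‖ is the one-sided directional derivative of a fixed norm ‖·‖ on ℝⁿ at x_s along x_i (so ‖x‖ = ‖x_i‖ε when x_s = 0). Then this function satisfies, under the lexicographic order on dual numbers: (i) ‖x‖ ≥ 0 with equality iff x = 0; (ii) ‖c x‖ = |c| ‖x‖ for every dual scalar c, where |a+bε| := |a| + sign(a) b ε for a ≠ 0 and |bε| := |b|ε; (iii) ‖x + y‖ ≤ ‖x‖ + ‖y‖. -/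
/-!
The real part of the dual norm is the norm itself, so everything rests on the one-sided
directional derivative `D x v` of a norm, which is unique as a one-sided limit. At the origin the
difference quotient is constantly `N v`, so `D 0 v = N v`; this gives definiteness and the case of
a purely infinitesimal scalar. For `a ≠ 0`, scaling the ray by `a` multiplies the derivative by
`|a|`, and adding `b • x` to the direction only adds `b * N x`; combined, these give the dual
homogeneity. When the real triangle inequality is strict, the lexicographic order ignores the
dual parts; when it is an equality, the difference quotients inherit subadditivity and the
inequality passes to the limit.
-/

open Filter Topology

/-- A norm on a real vector space. -/
def IsNorm {α : Type*} [AddCommGroup α] [Module ℝ α] (N : α → ℝ) : Prop :=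
  (∀ x y, N (x + y) ≤ N x + N y) ∧ (∀ (c : ℝ) (x : α), N (c • x) = |c| * N x) ∧
    (∀ x, N x = 0 → x = 0)

/-- Lexicographic (total) order on dual numbers represented as pairs. -/
def dualLe (p q : ℝ × ℝ) : Prop := p.1 < q.1 ∨ (p.1 = q.1 ∧ p.2 ≤ q.2)

/-- Product of dual numbers (ε² = 0). -/
def dualMul (p q : ℝ × ℝ) : ℝ × ℝ := (p.1 * q.1, p.1 * q.2 + p.2 * q.1)

/-- Absolute value of a dual number: `|a+bε| = |a| + sign(a) b ε` for `a ≠ 0`,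
and `|bε| = |b|ε`. -/
noncomputable def dualAbs (c : ℝ × ℝ) : ℝ × ℝ :=
  if c.1 = 0 then (0, |c.2|) else (|c.1|, Real.sign c.1 * c.2)

variable {E : Type*} [AddCommGroup E] [Module ℝ E]

def HasRightDirDeriv (f : E → ℝ) (x v : E) (d : ℝ) : Prop :=
  Tendsto (fun t : ℝ => (f (x + t • v) - f x) / t) (𝓝[>] 0) (𝓝 d)

namespace HasRightDirDeriv

variable {f : E → ℝ} {x y u v : E} {a b c d d' : ℝ}

theorem unique (h : HasRightDirDeriv f x v d) (h' : HasRightDirDeriv f x v d') : d = d' :=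
  tendsto_nhds_unique h h'

theorem le_add_of_subadditive (hf : ∀ x y, f (x + y) ≤ f x + f y)
    (hxy : f (x + y) = f x + f y) (hx : HasRightDirDeriv f x u a)
    (hy : HasRightDirDeriv f y v b) (hsum : HasRightDirDeriv f (x + y) (u + v) c) :
    c ≤ a + b := by
  refine le_of_tendsto_of_tendsto hsum (hx.add hy) ?_
  filter_upwards [self_mem_nhdsWithin] with t (ht : 0 < t)
  have hsplit : x + y + t • (u + v) = (x + t • u) + (y + t • v) := by module
  rw [← add_div, hxy, hsplit]
  gcongr
  linarith [hf (x + t • u) (y + t • v)]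

end HasRightDirDeriv

namespace IsNorm

variable {N : E → ℝ} {x v : E} {d : ℝ}

theorem map_zero (hN : IsNorm N) : N 0 = 0 := by
  simpa using hN.2.1 0 0

theorem map_neg (hN : IsNorm N) (x : E) : N (-x) = N x := by
  simpa using hN.2.1 (-1) x

theorem nonneg (hN : IsNorm N) (x : E) : 0 ≤ N x := by
  have h := hN.1 x (-x)
  rw [add_neg_cancel, hN.map_zero, hN.map_neg] at h
  linarith

theorem eq_zero_iff (hN : IsNorm N) : N x = 0 ↔ x = 0 :=
  ⟨hN.2.2 x, fun h => h ▸ hN.map_zero⟩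

theorem hasRightDirDeriv_zero (hN : IsNorm N) (v : E) : HasRightDirDeriv N 0 v (N v) := by
  refine tendsto_const_nhds.congr' ?_
  filter_upwards [self_mem_nhdsWithin] with t (ht : 0 < t)
  rw [zero_add, hN.map_zero, sub_zero, hN.2.1, abs_of_pos ht, mul_div_cancel_left₀ _ ht.ne']

theorem hasRightDirDeriv_smul (hN : IsNorm N) (h : HasRightDirDeriv N x v d) (a : ℝ) :
    HasRightDirDeriv N (a • x) (a • v) (|a| * d) := by
  refine (h.const_mul |a|).congr fun t => ?_
  rw [smul_comm, ← smul_add, hN.2.1, hN.2.1, ← mul_sub, mul_div_assoc]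

/-- Adding `b • x` to the direction only reparametrizes the ray:
`x + t • (v + b • x) = (1 + t * b) • (x + τ • v)` with `τ = t / (1 + t * b) → 0⁺`. -/
theorem hasRightDirDeriv_add_smul_self (hN : IsNorm N) (h : HasRightDirDeriv N x v d)
    (b : ℝ) : HasRightDirDeriv N x (v + b • x) (d + b * N x) := by
  set τ : ℝ → ℝ := fun t => t / (1 + t * b) with hτ
  have hscale_pos : ∀ᶠ t in 𝓝[>] (0 : ℝ), 0 < 1 + t * b := nhdsWithin_le_nhds <|
    (Continuous.tendsto' (by fun_prop) 0 1 (by simp)).eventually (eventually_gt_nhds one_pos)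
  have hτ_cont : ContinuousAt τ 0 := ContinuousAt.div (by fun_prop) (by fun_prop) (by simp)
  have hτ_lim : Tendsto τ (𝓝[>] 0) (𝓝[>] 0) := by
    refine tendsto_nhdsWithin_iff.2 ⟨?_, ?_⟩
    · simpa [hτ] using hτ_cont.tendsto.mono_left nhdsWithin_le_nhds
    · filter_upwards [hscale_pos, self_mem_nhdsWithin] with t hpos (ht : 0 < t)
      exact div_pos ht hpos
  refine ((h.comp hτ_lim).add_const (b * N x)).congr' ?_
  filter_upwards [hscale_pos, self_mem_nhdsWithin] with t hpos (ht : 0 < t)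
  have hray : x + t • (v + b • x) = (1 + t * b) • (x + τ t • v) := by
    rw [smul_add (1 + t * b), smul_smul, hτ, mul_div_cancel₀ _ hpos.ne']
    module
  simp only [Function.comp, hray, hN.2.1, abs_of_pos hpos, hτ]
  field_simp
  ring

theorem hasRightDirDeriv_smul_add_smul (hN : IsNorm N) (h : HasRightDirDeriv N x v d)
    {a : ℝ} (ha : a ≠ 0) (b : ℝ) :
    HasRightDirDeriv N (a • x) (a • v + b • x) (|a| * d + Real.sign a * b * N x) := by
  have hx : b • x = (b / a) • a • x := by rw [smul_smul, div_mul_cancel₀ _ ha]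
  have hcoef : b / a * (|a| * N x) = Real.sign a * b * N x := by
    rcases ha.lt_or_gt with ha | ha
    · rw [abs_of_neg ha, Real.sign_of_neg ha]; field_simp
    · rw [abs_of_pos ha, Real.sign_of_pos ha]; field_simp
  simpa only [hx, hN.2.1, hcoef] using
    hN.hasRightDirDeriv_add_smul_self (hN.hasRightDirDeriv_smul h a) (b / a)

end IsNorm

section DualNorm

variable {N : E → ℝ} {D : E → E → ℝ}

def dualNorm (N : E → ℝ) (D : E → E → ℝ) (x : E × E) : ℝ × ℝ := (N x.1, D x.1 x.2)

theorem dirDeriv_zero_eq (hN : IsNorm N) (hD : ∀ xs xi, HasRightDirDeriv N xs xi (D xs xi))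
    (v : E) : D 0 v = N v :=
  (hD 0 v).unique (hN.hasRightDirDeriv_zero v)

theorem dualLe_zero_dualNorm (hN : IsNorm N) (hD : ∀ xs xi, HasRightDirDeriv N xs xi (D xs xi))
    (x : E × E) : dualLe (0, 0) (dualNorm N D x) := by
  rcases (hN.nonneg x.1).eq_or_lt with h | h
  · have hx : x.1 = 0 := hN.eq_zero_iff.1 h.symm
    refine Or.inr ⟨h, ?_⟩
    simpa only [dualNorm, hx, dirDeriv_zero_eq hN hD] using hN.nonneg x.2
  · exact Or.inl h

theorem dualNorm_eq_zero_iff (hN : IsNorm N) (hD : ∀ xs xi, HasRightDirDeriv N xs xi (D xs xi))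
    (x : E × E) : dualNorm N D x = (0, 0) ↔ x = 0 := by
  obtain ⟨x₁, x₂⟩ := x
  by_cases hx : x₁ = 0
  · simp [dualNorm, hx, dirDeriv_zero_eq hN hD, hN.eq_zero_iff]
  · simp [dualNorm, hx, hN.eq_zero_iff]

theorem dualNorm_smul (hN : IsNorm N) (hD : ∀ xs xi, HasRightDirDeriv N xs xi (D xs xi))
    (c : ℝ × ℝ) (x : E × E) :
    dualNorm N D (c.1 • x.1, c.1 • x.2 + c.2 • x.1) = dualMul (dualAbs c) (dualNorm N D x) := by
  obtain ⟨a, b⟩ := c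
  by_cases ha : a = 0
  · simp [dualNorm, dualMul, dualAbs, ha, dirDeriv_zero_eq hN hD, hN.map_zero, hN.2.1]
  · have hderiv := (hD (a • x.1) (a • x.2 + b • x.1)).unique
      (hN.hasRightDirDeriv_smul_add_smul (hD x.1 x.2) ha b)
    simp only [dualNorm, dualMul, dualAbs, if_neg ha, hN.2.1, hderiv]

theorem dualLe_dualNorm_add (hN : IsNorm N) (hD : ∀ xs xi, HasRightDirDeriv N xs xi (D xs xi))
    (x y : E × E) :
    dualLe (dualNorm N D (x + y)) (dualNorm N D x + dualNorm N D y) := by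
  rcases (hN.1 x.1 y.1).eq_or_lt with h | h
  · exact Or.inr ⟨h, HasRightDirDeriv.le_add_of_subadditive hN.1 h (hD x.1 x.2) (hD y.1 y.2)
      (hD (x.1 + y.1) (x.2 + y.2))⟩
  · exact Or.inl h

end DualNorm

/-- The dual continuation `‖x_s + x_i ε‖ := ‖x_s‖ + D_{x_i}‖x_s‖ ε` of a norm
on `ℝⁿ` (with one-sided directional derivative `D`) is a dual-valued vector
norm: it is nonnegative and definite, absolutely homogeneous with respect to
dual scalars, and satisfies the triangle inequality, all in the lexicographic
order on dual numbers. -/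
theorem dual_vector_norm {n : ℕ} (N : (Fin n → ℝ) → ℝ) (hN : IsNorm N)
    (D : (Fin n → ℝ) → (Fin n → ℝ) → ℝ)
    (hD : ∀ xs xi, Tendsto (fun t : ℝ => (N (xs + t • xi) - N xs) / t)
      (𝓝[>] 0) (𝓝 (D xs xi))) :
    (∀ x : (Fin n → ℝ) × (Fin n → ℝ),
      dualLe (0, 0) (N x.1, D x.1 x.2) ∧ ((N x.1, D x.1 x.2) = ((0 : ℝ), (0 : ℝ)) ↔ x = 0)) ∧
    (∀ (c : ℝ × ℝ) (x : (Fin n → ℝ) × (Fin n → ℝ)),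
      (N (c.1 • x.1), D (c.1 • x.1) (c.1 • x.2 + c.2 • x.1))
        = dualMul (dualAbs c) (N x.1, D x.1 x.2)) ∧
    (∀ x y : (Fin n → ℝ) × (Fin n → ℝ),
      dualLe (N (x.1 + y.1), D (x.1 + y.1) (x.2 + y.2))
        ((N x.1, D x.1 x.2) + (N y.1, D y.1 y.2))) :=
  ⟨fun x => ⟨dualLe_zero_dualNorm hN hD x, dualNorm_eq_zero_iff hN hD x⟩,
    dualNorm_smul hN hD, dualLe_dualNorm_add hN hD⟩
end

section
/- For a nonzero x_s ∈ ℝⁿ, 1 < p < ∞, and any x_i ∈ ℝⁿ, the dual-valued p-norm computed element-wise agrees with the directional-derivative formula: (∑_k |x_s^k + x_i^k ε|^p)^{1/p} = ‖x_s‖_p + ⟨|x_s|^{p−2} ⊙ x_s, x_i⟩ / ‖x_s‖_p^{p−1} · ε, assuming x_s^k ≠ 0 for all k. -/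
/-- Dual power with real exponent `q` (valid for positive standard part):
`(a + bε)^q = a^q + q a^{q−1} b ε`. -/
noncomputable def dualPow (q : ℝ) (c : ℝ × ℝ) : ℝ × ℝ :=
  (c.1 ^ q, q * c.1 ^ (q - 1) * c.2)

/-!
For `a ≠ 0` the dual absolute value is `|a| + sign(a) b ε`, so its `p`-th dual power is
`|a|^p + p |a|^(p-1) sign(a) b ε = |a|^p + p |a|^(p-2) a b ε`; for `p > 1` the same formula also
holds at `a = 0`, where both sides vanish. Summing gives `S + p T ε` with `S = ∑ |x_s^k|^p` and
`T = ∑ |x_s^k|^(p-2) x_s^k x_i^k`, and the dual `1/p`-th power of that is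
`S^(1/p) + S^(1/p - 1) T ε = S^(1/p) + T / (S^(1/p))^(p-1) ε`.
-/

theorem Real.sign_mul_abs (x : ℝ) : Real.sign x * |x| = x := by
  rcases lt_trichotomy x 0 with h | rfl | h
  · rw [Real.sign_of_neg h, abs_of_neg h]; ring
  · simp
  · rw [Real.sign_of_pos h, abs_of_pos h]; ring

theorem dualPow_dualAbs {p : ℝ} (hp : 1 < p) (a b : ℝ) :
    dualPow p (dualAbs (a, b)) = (|a| ^ p, p * (|a| ^ (p - 2) * a * b)) := by
  rcases eq_or_ne a 0 with rfl | ha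
  · simp [dualPow, dualAbs, Real.zero_rpow (by linarith : p ≠ 0),
      Real.zero_rpow (by linarith : p - 1 ≠ 0)]
  · have hpow : |a| ^ (p - 1) = |a| ^ (p - 2) * |a| := by
      rw [← Real.rpow_add_one (abs_ne_zero.mpr ha)]; ring_nf
    simp only [dualPow, dualAbs, if_neg ha, Prod.mk.injEq, true_and]
    calc p * |a| ^ (p - 1) * (Real.sign a * b)
        = p * (|a| ^ (p - 2) * (Real.sign a * |a|) * b) := by rw [hpow]; ring
      _ = p * (|a| ^ (p - 2) * a * b) := by rw [Real.sign_mul_abs]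

theorem dualPow_one_div {p S : ℝ} (hp₀ : p ≠ 0) (hp₁ : p ≠ 1) (hS : 0 ≤ S) (T : ℝ) :
    dualPow (1 / p) (S, p * T) = (S ^ (1 / p), T / (S ^ (1 / p)) ^ (p - 1)) := by
  simp only [dualPow, Prod.mk.injEq, true_and]
  rcases hS.eq_or_lt with rfl | hS
  · have h : 1 / p - 1 ≠ 0 := by
      rw [sub_ne_zero, ne_eq, one_div, inv_eq_one]; exact hp₁
    rw [Real.zero_rpow h, Real.zero_rpow (one_div_ne_zero hp₀),
      Real.zero_rpow (sub_ne_zero.mpr hp₁)]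
    simp
  · have hexp : 1 / p - 1 = -(1 / p * (p - 1)) := by field_simp; ring
    rw [← Real.rpow_mul hS.le, hexp, Real.rpow_neg hS.le]
    field_simp

theorem dual_pnorm_elementwise_general {n : ℕ} (p : ℝ) (hp : 1 < p) (xs xi : Fin n → ℝ) :
    dualPow (1 / p) (∑ k, dualPow p (dualAbs (xs k, xi k)))
      = ((∑ k, |xs k| ^ p) ^ (1 / p),
          (∑ k, |xs k| ^ (p - 2) * xs k * xi k)
            / ((∑ k, |xs k| ^ p) ^ (1 / p)) ^ (p - 1)) := by
  have hsum : ∑ k, dualPow p (dualAbs (xs k, xi k))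
      = (∑ k, |xs k| ^ p, p * ∑ k, |xs k| ^ (p - 2) * xs k * xi k) := by
    ext <;> simp only [Prod.fst_sum, Prod.snd_sum, dualPow_dualAbs hp, Finset.mul_sum]
  rw [hsum]
  exact dualPow_one_div (by linarith) hp.ne' (by positivity) _

/-- For a nonzero `x_s ∈ ℝⁿ` with all entries nonzero, `1 < p < ∞`, and any
`x_i`, the dual-valued `p`-norm computed element-wise on the dual vector
`x_s + x_i ε` agrees with the directional-derivative formula:
`(∑_k |x_s^k + x_i^k ε|^p)^{1/p} = ‖x_s‖_p + ⟨|x_s|^{p−2} ⊙ x_s, x_i⟩ / ‖x_s‖_p^{p−1} ε`. -/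
theorem dual_pnorm_elementwise {n : ℕ} (p : ℝ) (hp : 1 < p) (xs xi : Fin n → ℝ)
    (hxs : ∀ k, xs k ≠ 0) :
    dualPow (1 / p) (∑ k, dualPow p (dualAbs (xs k, xi k)))
      = ((∑ k, |xs k| ^ p) ^ (1 / p),
          (∑ k, |xs k| ^ (p - 2) * xs k * xi k)
            / ((∑ k, |xs k| ^ p) ^ (1 / p)) ^ (p - 1)) :=
  dual_pnorm_elementwise_general p hp xs xi
end

section
/- Let P = P_s + P_i ε be an n×n dual matrix with P ≥ O entrywise (in the lexicographic order on dual numbers) and 𝟙ᵀP = 𝟙ᵀ. If P is invertible and P⁻¹ also satisfies P⁻¹ ≥ O and 𝟙ᵀP⁻¹ = 𝟙ᵀ, then P_s is a permutation matrix and P_i = O. -/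
/-- A dynamically reversible dual transitional probability matrix is a
permutation matrix: if `P = P_s + P_i ε` is entrywise dual-nonnegative with
dual column sums 1, invertible with dual inverse `Q = Q_s + Q_i ε` that is
also entrywise dual-nonnegative with dual column sums 1, then `P_s` is a
permutation matrix and `P_i = 0`. -/
theorem dtpm_reversible_iff_permutation {n : ℕ}
    (Ps Pi Qs Qi : Matrix (Fin n) (Fin n) ℝ)
    (hPnn : ∀ j k, dualLe (0, 0) (Ps j k, Pi j k))
    (hPs : ∀ k, ∑ j, Ps j k = 1) (hPi : ∀ k, ∑ j, Pi j k = 0)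
    (hinv1 : Ps * Qs = 1) (hinv2 : Ps * Qi + Pi * Qs = 0)
    (hinv3 : Qs * Ps = 1) (hinv4 : Qs * Pi + Qi * Ps = 0)
    (hQnn : ∀ j k, dualLe (0, 0) (Qs j k, Qi j k))
    (hQs : ∀ k, ∑ j, Qs j k = 1) (hQi : ∀ k, ∑ j, Qi j k = 0) :
    (∃ σ : Equiv.Perm (Fin n), ∀ j k, Ps j k = if σ k = j then 1 else 0) ∧
      Pi = 0 := by
  have hPsnn : ∀ j k, 0 ≤ Ps j k := by
    intro j k; rcases hPnn j k with h | ⟨h, _⟩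
    · exact le_of_lt h
    · exact le_of_eq h
  have hQsnn : ∀ j k, 0 ≤ Qs j k := by
    intro j k; rcases hQnn j k with h | ⟨h, _⟩
    · exact le_of_lt h
    · exact le_of_eq h
  -- for each k choose m k with Qs (m k) k > 0
  have hex : ∀ k, ∃ i, 0 < Qs i k := by
    intro k
    by_contra h
    push_neg at h
    have hz : ∀ i, Qs i k = 0 := fun i => le_antisymm (h i) (hQsnn i k)
    have hs := hQs k
    simp [hz] at hs
  choose m hm using hex
  have hPm0 : ∀ j k, j ≠ k → Ps j (m k) = 0 := by
    intro j k hjk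
    have h := congrFun (congrFun hinv1 j) k
    rw [Matrix.mul_apply, Matrix.one_apply_ne hjk] at h
    have hterm : Ps j (m k) * Qs (m k) k = 0 := by
      have := (Finset.sum_eq_zero_iff_of_nonneg (fun i _ =>
        mul_nonneg (hPsnn j i) (hQsnn i k))).mp h (m k) (Finset.mem_univ _)
      exact this
    rcases mul_eq_zero.mp hterm with h' | h'
    · exact h'
    · exact absurd h' (ne_of_gt (hm k))
  have hPm1 : ∀ k, Ps k (m k) = 1 := by
    intro k
    have hs := hPs (m k)
    rwa [Fintype.sum_eq_single k (fun j hj => hPm0 j k hj)] at hs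
  have hminj : Function.Injective m := by
    intro k k' h
    by_contra hne
    have h0 : Ps k (m k') = 0 := hPm0 k k' hne
    rw [← h, hPm1 k] at h0
    norm_num at h0
  let τ : Equiv.Perm (Fin n) := Equiv.ofBijective m (Finite.injective_iff_bijective.mp hminj)
  set σ := τ.symm with hσ
  have hmτ : ∀ k, m (σ k) = k := fun k => τ.apply_symm_apply k
  have hPentry : ∀ j k, Ps j k = if σ k = j then 1 else 0 := by
    intro j k
    by_cases h : σ k = j
    · rw [if_pos h, ← hmτ k, h]
      exact hPm1 j
    · rw [if_neg h, ← hmτ k]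
      exact hPm0 j (σ k) (fun hh => h hh.symm)
  refine ⟨⟨σ, hPentry⟩, ?_⟩
  -- Qs entries
  have hQentry : ∀ j k, Qs j k = if σ j = k then 1 else 0 := by
    intro j k
    have h := congrFun (congrFun hinv3 j) (σ.symm k)
    rw [Matrix.mul_apply] at h
    have hsum : ∑ i, Qs j i * Ps i (σ.symm k) = Qs j k := by
      rw [Fintype.sum_eq_single k]
      · rw [hPentry, Equiv.apply_symm_apply, if_pos rfl, mul_one]
      · intro i hi
        rw [hPentry, Equiv.apply_symm_apply, if_neg (fun hh => hi hh.symm), mul_zero]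
    rw [hsum, Matrix.one_apply] at h
    rw [h]
    by_cases hc : σ j = k
    · rw [if_pos hc, if_pos]
      rw [← hc, Equiv.symm_apply_apply]
    · rw [if_neg hc, if_neg]
      intro hh
      exact hc (by rw [hh, Equiv.apply_symm_apply])
  have hPi_nn : ∀ j k, σ k ≠ j → 0 ≤ Pi j k := by
    intro j k h
    rcases hPnn j k with h' | ⟨_, h'⟩
    · exfalso
      simp only at h'
      rw [hPentry j k, if_neg h] at h'
      exact lt_irrefl 0 h'
    · exact h'
  have hQi_nn : ∀ j k, σ j ≠ k → 0 ≤ Qi j k := by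
    intro j k h
    rcases hQnn j k with h' | ⟨_, h'⟩
    · exfalso
      simp only at h'
      rw [hQentry j k, if_neg h] at h'
      exact lt_irrefl 0 h'
    · exact h'
  -- entrywise form of hinv2
  have E2 : ∀ j k, Qi (σ.symm j) k + Pi j (σ.symm k) = 0 := by
    intro j k
    have h := congrFun (congrFun hinv2 j) k
    rw [Matrix.add_apply, Matrix.mul_apply, Matrix.mul_apply] at h
    have h1 : ∑ i, Ps j i * Qi i k = Qi (σ.symm j) k := by
      rw [Fintype.sum_eq_single (σ.symm j)]
      · rw [hPentry, Equiv.apply_symm_apply, if_pos rfl, one_mul]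
      · intro i hi
        rw [hPentry, if_neg, zero_mul]
        intro hh
        exact hi (by rw [← hh, Equiv.symm_apply_apply])
    have h2 : ∑ i, Pi j i * Qs i k = Pi j (σ.symm k) := by
      rw [Fintype.sum_eq_single (σ.symm k)]
      · rw [hQentry, Equiv.apply_symm_apply, if_pos rfl, mul_one]
      · intro i hi
        rw [hQentry, if_neg, mul_zero]
        intro hh
        exact hi (by rw [← hh, Equiv.symm_apply_apply])
    rw [h1, h2] at h
    simpa using h
  -- off-diagonal entries of Pi vanish
  have hoff : ∀ j k, σ k ≠ j → Pi j k = 0 := by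
    intro j k h
    refine le_antisymm ?_ (hPi_nn j k h)
    have he := E2 j (σ k)
    rw [Equiv.symm_apply_apply] at he
    have hq : 0 ≤ Qi (σ.symm j) (σ k) := by
      apply hQi_nn
      rw [Equiv.apply_symm_apply]
      intro hh
      exact h (by rw [← hh])
    linarith
  have hdiag : ∀ k, Pi (σ k) k = 0 := by
    intro k
    have hs := hPi k
    rwa [Fintype.sum_eq_single (σ k) (fun j hj => hoff j k (fun hh => hj hh.symm))] at hs
  ext j k
  by_cases h : σ k = j
  · rw [← h]; simpa using hdiag k
  · simpa using hoff j k h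
end
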